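/- arXiv:2002.03265 — 3 statements merged into one kernel-verified Lean document; each statement's English description precedes it below -/
import Mathlib

section
/- Fix reals c_{mnk} ≥ 0, q_k ≥ 0, B_k ∈ ℝ, x₀_k > 0, P_max > 0, natural numbers D_k ≤ N, and weights W_{mnk} > 0. Writing g_c(t,p) = t·log₂(1 + c·p/t) for t > 0 and g_c(0,p) = 0, the set of pairs (I, p) ∈ ℝ^{M×N×K} × ℝ^{M×N×K} satisfying: 0 ≤ I_{mnk} ≤ 1 for all m,n,k; Σ_k I_{mnk} ≤ 1 for all m,n; I_{mnk} = 0 whenever n > D_k; 0 ≤ p_{mnk} ≤ I_{mnk}·P_max for all m,n,k; Σ_k W_{mnk}·I_{mnk} ≤ 1 for all m,n; and Σ_{m,n} g_{c_{mnk}}(I_{mnk}, p_{mnk}) − ((x_k + x₀_k)/(2√(x₀_k)))·q_k/ln 2 ≥ B_k with x_k = Σ_{m,n} I_{mnk}, for all k, is a convex subset of ℝ^{M×N×K} × ℝ^{M×N×K}. -/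
/-!
The rate constraint is the only non-linear one: its left-hand side is a sum of perspectives
`t · f(p/t)` of the concave function `f u = log₂(1 + c u)`, minus a term affine in `I`.
A perspective is positively homogeneous, and concavity of `f` makes it superadditive; together
these give concavity on the cone `0 ≤ p ≤ t · Pmax`, whose superlevel sets are convex.
-/

open Finset

/-- Perspective of `p ↦ log₂(1 + c·p)`: `g(t,p) = t·log₂(1 + c·p/t)` for `t ≠ 0`,
and `g(0,p) = 0`. -/
noncomputable def gPersp (c t p : ℝ) : ℝ :=
  if t = 0 then 0 else t * Real.logb 2 (1 + c * p / t)

open Set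

theorem ConcaveOn.perspective_add_le {s : Set ℝ} {f : ℝ → ℝ} (hf : ConcaveOn ℝ s f)
    {t₁ t₂ p₁ p₂ : ℝ} (ht₁ : 0 < t₁) (ht₂ : 0 < t₂) (h₁ : p₁ / t₁ ∈ s) (h₂ : p₂ / t₂ ∈ s) :
    t₁ * f (p₁ / t₁) + t₂ * f (p₂ / t₂) ≤ (t₁ + t₂) * f ((p₁ + p₂) / (t₁ + t₂)) := by
  have hT : 0 < t₁ + t₂ := add_pos ht₁ ht₂
  have key := hf.2 h₁ h₂ (div_pos ht₁ hT).le (div_pos ht₂ hT).le (by field_simp)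
  have hmid : (t₁ / (t₁ + t₂)) • (p₁ / t₁) + (t₂ / (t₁ + t₂)) • (p₂ / t₂) =
      (p₁ + p₂) / (t₁ + t₂) := by
    simp only [smul_eq_mul]
    field_simp
  rw [hmid, smul_eq_mul, smul_eq_mul] at key
  calc t₁ * f (p₁ / t₁) + t₂ * f (p₂ / t₂)
      = (t₁ + t₂) * (t₁ / (t₁ + t₂) * f (p₁ / t₁) + t₂ / (t₁ + t₂) * f (p₂ / t₂)) := by
        field_simp
    _ ≤ (t₁ + t₂) * f ((p₁ + p₂) / (t₁ + t₂)) := by gcongr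

theorem concaveOn_logb_one_add_mul {c : ℝ} (hc : 0 ≤ c) :
    ConcaveOn ℝ (Ici 0) fun u => Real.logb 2 (1 + c * u) := by
  refine ⟨convex_Ici 0, fun x hx y hy a b ha hb hab => ?_⟩
  have hpos : ∀ u ∈ Ici (0 : ℝ), 1 + c * u ∈ Ioi (0 : ℝ) := fun u hu =>
    add_pos_of_pos_of_nonneg one_pos (mul_nonneg hc hu)
  have key := strictConcaveOn_log_Ioi.concaveOn.2 (hpos x hx) (hpos y hy) ha hb hab
  have hmid : a • (1 + c * x) + b • (1 + c * y) = 1 + c * (a • x + b • y) := by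
    simp only [smul_eq_mul]
    linear_combination hab
  rw [hmid] at key
  simp only [Real.logb, smul_eq_mul, ← mul_div_assoc, ← add_div] at key ⊢
  exact div_le_div_of_nonneg_right key (Real.log_pos one_lt_two).le

theorem gPersp_mul_mul (c b t p : ℝ) : gPersp c (b * t) (b * p) = b * gPersp c t p := by
  rcases eq_or_ne b 0 with rfl | hb
  · simp [gPersp]
  rcases eq_or_ne t 0 with rfl | ht
  · simp [gPersp]
  rw [gPersp, gPersp, if_neg (mul_ne_zero hb ht), if_neg ht, mul_left_comm c,
    mul_div_mul_left _ _ hb, mul_assoc]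

theorem gPersp_add_le {c t₁ t₂ p₁ p₂ : ℝ} (hc : 0 ≤ c) (ht₁ : 0 ≤ t₁) (ht₂ : 0 ≤ t₂)
    (hp₁ : 0 ≤ p₁) (hp₂ : 0 ≤ p₂) (h₁ : t₁ = 0 → p₁ = 0) (h₂ : t₂ = 0 → p₂ = 0) :
    gPersp c t₁ p₁ + gPersp c t₂ p₂ ≤ gPersp c (t₁ + t₂) (p₁ + p₂) := by
  rcases ht₁.eq_or_lt with rfl | ht₁
  · simp [h₁ rfl, gPersp]
  rcases ht₂.eq_or_lt with rfl | ht₂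
  · simp [h₂ rfl, gPersp]
  have h := (concaveOn_logb_one_add_mul hc).perspective_add_le ht₁ ht₂
    (div_nonneg hp₁ ht₁.le) (div_nonneg hp₂ ht₂.le)
  simpa only [gPersp, if_neg ht₁.ne', if_neg ht₂.ne', if_neg (add_pos ht₁ ht₂).ne',
    mul_div_assoc] using h

def powerCone (P : ℝ) : Set (ℝ × ℝ) := {z | 0 ≤ z.1 ∧ 0 ≤ z.2 ∧ z.2 ≤ z.1 * P}

theorem convex_powerCone (P : ℝ) : Convex ℝ (powerCone P) := by
  rintro ⟨t₁, p₁⟩ ⟨ht₁, hp₁, hle₁⟩ ⟨t₂, p₂⟩ ⟨ht₂, hp₂, hle₂⟩ a b ha hb -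
  simp only [powerCone, mem_ofPred_eq, Prod.fst_add, Prod.snd_add, Prod.smul_fst, Prod.smul_snd,
    smul_eq_mul]
  refine ⟨by positivity, by positivity, ?_⟩
  nlinarith [mul_le_mul_of_nonneg_left hle₁ ha, mul_le_mul_of_nonneg_left hle₂ hb]

theorem concaveOn_gPersp {c : ℝ} (hc : 0 ≤ c) (P : ℝ) :
    ConcaveOn ℝ (powerCone P) fun z => gPersp c z.1 z.2 := by
  refine ⟨convex_powerCone P, ?_⟩
  rintro ⟨t₁, p₁⟩ ⟨ht₁, hp₁, hle₁⟩ ⟨t₂, p₂⟩ ⟨ht₂, hp₂, hle₂⟩ a b ha hb -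
  have apex : ∀ {s t p : ℝ}, 0 ≤ p → p ≤ t * P → s * t = 0 → s * p = 0 := by
    intro s t p hp hle hst
    rcases mul_eq_zero.1 hst with rfl | rfl
    · exact zero_mul p
    · rw [le_antisymm (by simpa using hle) hp, mul_zero]
  simp only [Prod.fst_add, Prod.snd_add, Prod.smul_fst, Prod.smul_snd, smul_eq_mul,
    ← gPersp_mul_mul]
  exact gPersp_add_le hc (by positivity) (by positivity) (by positivity) (by positivity)
    (apex hp₁ hle₁) (apex hp₂ hle₂)

theorem sca_subproblem_feasible_set_convex_general (M N K : ℕ)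
    (c : Fin M → Fin N → Fin K → ℝ) (q B x₀ : Fin K → ℝ) (D : Fin K → ℕ) (Pmax : ℝ)
    (W : Fin M → Fin N → Fin K → ℝ)
    (hc : ∀ m n k, 0 ≤ c m n k) :
    Convex ℝ {x : (Fin M → Fin N → Fin K → ℝ) × (Fin M → Fin N → Fin K → ℝ) |
      (∀ m n k, 0 ≤ x.1 m n k ∧ x.1 m n k ≤ 1) ∧
      (∀ m n, (∑ k, x.1 m n k) ≤ 1) ∧
      (∀ m n k, D k < n.val + 1 → x.1 m n k = 0) ∧
      (∀ m n k, 0 ≤ x.2 m n k ∧ x.2 m n k ≤ x.1 m n k * Pmax) ∧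
      (∀ m n, (∑ k, W m n k * x.1 m n k) ≤ 1) ∧
      (∀ k, B k ≤ (∑ m, ∑ n, gPersp (c m n k) (x.1 m n k) (x.2 m n k))
        - ((∑ m, ∑ n, x.1 m n k) + x₀ k) / (2 * Real.sqrt (x₀ k)) * q k / Real.log 2)} := by
  rintro x ⟨hIx, hsumx, hdelx, hpowx, hWx, hratex⟩ y ⟨hIy, hsumy, hdely, hpowy, hWy, hratey⟩
    a b ha hb hab
  have hconex : ∀ m n k, (x.1 m n k, x.2 m n k) ∈ powerCone Pmax :=
    fun m n k => ⟨(hIx m n k).1, hpowx m n k⟩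
  have hconey : ∀ m n k, (y.1 m n k, y.2 m n k) ∈ powerCone Pmax :=
    fun m n k => ⟨(hIy m n k).1, hpowy m n k⟩
  simp only [mem_ofPred_eq, Prod.fst_add, Prod.snd_add, Prod.smul_fst, Prod.smul_snd,
    Pi.add_apply, Pi.smul_apply, smul_eq_mul, mul_add, mul_left_comm (W _ _ _), sum_add_distrib,
    ← mul_sum]
  refine ⟨fun m n k => convex_Icc (0 : ℝ) 1 (hIx m n k) (hIy m n k) ha hb hab,
    fun m n => convex_Iic (1 : ℝ) (hsumx m n) (hsumy m n) ha hb hab,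
    fun m n k hk => by rw [hdelx m n k hk, hdely m n k hk, mul_zero, mul_zero, add_zero],
    fun m n k => (convex_powerCone Pmax (hconex m n k) (hconey m n k) ha hb hab).2,
    fun m n => convex_Iic (1 : ℝ) (hWx m n) (hWy m n) ha hb hab, fun k => ?_⟩
  have hg : a * ∑ m, ∑ n, gPersp (c m n k) (x.1 m n k) (x.2 m n k) +
      b * ∑ m, ∑ n, gPersp (c m n k) (y.1 m n k) (y.2 m n k) ≤
      ∑ m, ∑ n, gPersp (c m n k) (a * x.1 m n k + b * y.1 m n k)
        (a * x.2 m n k + b * y.2 m n k) := by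
    simp only [mul_sum, ← sum_add_distrib]
    exact sum_le_sum fun m _ => sum_le_sum fun n _ =>
      (concaveOn_gPersp (hc m n k) Pmax).2 (hconex m n k) (hconey m n k) ha hb hab
  -- `a + b = 1` splits the constants `B k` and `x₀ k` of the affine part.
  linear_combination mul_le_mul_of_nonneg_left (hratex k) ha +
    mul_le_mul_of_nonneg_left (hratey k) hb + hg +
    -(B k + x₀ k / (2 * √(x₀ k)) * q k / Real.log 2) * hab

/-- The feasible region of the convex SCA subproblem (relaxed assignments, effective
powers, delay, reweighted ℓ₁ and linearized rate constraints) is a convex set. -/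
theorem sca_subproblem_feasible_set_convex (M N K : ℕ)
    (c : Fin M → Fin N → Fin K → ℝ) (q B x₀ : Fin K → ℝ) (D : Fin K → ℕ) (Pmax : ℝ)
    (W : Fin M → Fin N → Fin K → ℝ)
    (hc : ∀ m n k, 0 ≤ c m n k) (hq : ∀ k, 0 ≤ q k) (hx₀ : ∀ k, 0 < x₀ k)
    (hD : ∀ k, D k ≤ N) (hPmax : 0 < Pmax) (hW : ∀ m n k, 0 < W m n k) :
    Convex ℝ {x : (Fin M → Fin N → Fin K → ℝ) × (Fin M → Fin N → Fin K → ℝ) |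
      (∀ m n k, 0 ≤ x.1 m n k ∧ x.1 m n k ≤ 1) ∧
      (∀ m n, (∑ k, x.1 m n k) ≤ 1) ∧
      (∀ m n k, D k < n.val + 1 → x.1 m n k = 0) ∧
      (∀ m n k, 0 ≤ x.2 m n k ∧ x.2 m n k ≤ x.1 m n k * Pmax) ∧
      (∀ m n, (∑ k, W m n k * x.1 m n k) ≤ 1) ∧
      (∀ k, B k ≤ (∑ m, ∑ n, gPersp (c m n k) (x.1 m n k) (x.2 m n k))
        - ((∑ m, ∑ n, x.1 m n k) + x₀ k) / (2 * Real.sqrt (x₀ k)) * q k / Real.log 2)} :=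
  sca_subproblem_feasible_set_convex_general M N K c q B x₀ D Pmax W hc
end

section
/- With the feasible region F(x₀) of the SCA subproblem defined for a vector of linearization points x₀ = (x₀_k) with each x₀_k > 0, the following holds: if (I, p) ∈ F(x₀) and for every k the new point x'_k = Σ_{m,n} I_{mnk} is positive, then (I, p) ∈ F(x'). Consequently, the optimal value of the subproblem at linearization point x' is at most the objective value Σ_{k,m,n} p_{mnk} of (I, p), so the sequence of subproblem optimal values produced by the SCA iterations is nonincreasing. -/
open Finset

/-- Feasible region `F(x₀)` of the SCA subproblem at linearization points `x₀`. -/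
noncomputable def FeasSCA (M N K : ℕ) (c : Fin M → Fin N → Fin K → ℝ)
    (q B : Fin K → ℝ) (D : Fin K → ℕ) (Pmax : ℝ) (x₀ : Fin K → ℝ) :
    Set ((Fin M → Fin N → Fin K → ℝ) × (Fin M → Fin N → Fin K → ℝ)) :=
  {x | (∀ m n k, 0 ≤ x.1 m n k ∧ x.1 m n k ≤ 1) ∧
    (∀ m n, (∑ k, x.1 m n k) ≤ 1) ∧
    (∀ m n k, D k < n.val + 1 → x.1 m n k = 0) ∧
    (∀ m n k, 0 ≤ x.2 m n k ∧ x.2 m n k ≤ x.1 m n k * Pmax) ∧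
    (∀ k, B k ≤ (∑ m, ∑ n, gPersp (c m n k) (x.1 m n k) (x.2 m n k))
      - ((∑ m, ∑ n, x.1 m n k) + x₀ k) / (2 * Real.sqrt (x₀ k)) * q k / Real.log 2)}

/-- If `(I,p) ∈ F(x₀)` and the updated linearization points `x'_k = Σ_{m,n} I_{mnk}` are
positive, then `(I,p) ∈ F(x')`; consequently the optimal value of the subproblem at `x'`
is at most the objective value of `(I,p)`, so the SCA objective values are nonincreasing. -/
theorem sca_monotone (M N K : ℕ) (c : Fin M → Fin N → Fin K → ℝ) (q B : Fin K → ℝ)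
    (D : Fin K → ℕ) (Pmax : ℝ) (x₀ x' : Fin K → ℝ)
    (hc : ∀ m n k, 0 ≤ c m n k) (hq : ∀ k, 0 ≤ q k) (hD : ∀ k, D k ≤ N)
    (hPmax : 0 < Pmax) (hx₀ : ∀ k, 0 < x₀ k)
    (I p : Fin M → Fin N → Fin K → ℝ)
    (hmem : (I, p) ∈ FeasSCA M N K c q B D Pmax x₀)
    (hx'def : ∀ k, x' k = ∑ m, ∑ n, I m n k) (hx'pos : ∀ k, 0 < x' k) :
    (I, p) ∈ FeasSCA M N K c q B D Pmax x' ∧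
    sInf {v : ℝ | ∃ I' p', (I', p') ∈ FeasSCA M N K c q B D Pmax x' ∧
        v = ∑ k, ∑ m, ∑ n, p' m n k}
      ≤ ∑ k, ∑ m, ∑ n, p m n k := by
  obtain ⟨h1, h2, h3, h4, h5⟩ := hmem
  have hmem' : (I, p) ∈ FeasSCA M N K c q B D Pmax x' := by
    refine ⟨h1, h2, h3, h4, fun k => ?_⟩
    have hlog : (0:ℝ) < Real.log 2 := Real.log_pos (by norm_num)
    have ha : 0 < x' k := hx'pos k
    have h0 : 0 < Real.sqrt (x₀ k) := Real.sqrt_pos.mpr (hx₀ k)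
    have ha0 : 0 < Real.sqrt (x' k) := Real.sqrt_pos.mpr ha
    have hself : Real.sqrt (x' k) * Real.sqrt (x' k) = x' k := Real.mul_self_sqrt ha.le
    have hself0 : Real.sqrt (x₀ k) * Real.sqrt (x₀ k) = x₀ k := Real.mul_self_sqrt (hx₀ k).le
    have heq : (x' k + x' k) / (2 * Real.sqrt (x' k)) = Real.sqrt (x' k) := by
      field_simp; linarith
    have hineq : Real.sqrt (x' k) ≤ (x' k + x₀ k) / (2 * Real.sqrt (x₀ k)) := by
      rw [le_div_iff₀ (by positivity)]
      nlinarith [sq_nonneg (Real.sqrt (x' k) - Real.sqrt (x₀ k))]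
    have hsum : (∑ m, ∑ n, I m n k) = x' k := (hx'def k).symm
    have key : ((∑ m, ∑ n, I m n k) + x' k) / (2 * Real.sqrt (x' k)) * q k / Real.log 2
        ≤ ((∑ m, ∑ n, I m n k) + x₀ k) / (2 * Real.sqrt (x₀ k)) * q k / Real.log 2 := by
      rw [hsum, heq]
      have := mul_le_mul_of_nonneg_right hineq (hq k)
      gcongr
    have := h5 k
    dsimp only at this ⊢
    linarith
  refine ⟨hmem', ?_⟩
  apply csInf_le
  · refine ⟨0, fun v hv => ?_⟩
    obtain ⟨I', p', hm, rfl⟩ := hv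
    have := hm.2.2.2.1
    exact Finset.sum_nonneg fun k _ => Finset.sum_nonneg fun m _ =>
      Finset.sum_nonneg fun n _ => (this m n k).1
  · exact ⟨I, p, hmem', rfl⟩
end

section
/- Let I_{mn} ∈ {0,1}, P_{mn} ≥ 0, c_{mn} ≥ 0, q ≥ 0, B ∈ ℝ, and x₀ > 0, with x = Σ_{m,n} I_{mn}. If the convexified constraint Σ_{m,n} I_{mn}·log₂(1 + c_{mn}P_{mn}) − ((x + x₀)/(2√x₀))·q/ln 2 ≥ B holds, then the exact finite-blocklength rate constraint Σ_{m,n} I_{mn}·log₂(1 + c_{mn}P_{mn}) − √(Σ_{m,n} I_{mn}·V_{mn})·q/ln 2 ≥ B holds, where V_{mn} = 1 − 1/(1 + c_{mn}P_{mn})² is the true channel dispersion on PRB (m,n). -/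
open Finset

/-- For binary assignments, the convexified constraint (dispersion `V = 1` and tangent
bound of `√x` at `x₀`) implies the exact finite-blocklength rate constraint with the true
dispersions `V_{mn} = 1 − 1/(1 + c_{mn}P_{mn})²`. -/
theorem convexified_implies_exact_fbl (M N : ℕ) (I P c : Fin M → Fin N → ℝ)
    (q B x₀ : ℝ)
    (hI : ∀ m n, I m n = 0 ∨ I m n = 1) (hP : ∀ m n, 0 ≤ P m n)
    (hc : ∀ m n, 0 ≤ c m n) (hq : 0 ≤ q) (hx₀ : 0 < x₀)
    (h : (∑ m, ∑ n, I m n * Real.logb 2 (1 + c m n * P m n))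
        - ((∑ m, ∑ n, I m n) + x₀) / (2 * Real.sqrt x₀) * q / Real.log 2 ≥ B) :
    (∑ m, ∑ n, I m n * Real.logb 2 (1 + c m n * P m n))
        - Real.sqrt (∑ m, ∑ n, I m n * (1 - 1 / (1 + c m n * P m n) ^ 2)) * q / Real.log 2
      ≥ B := by
  set S := ∑ m, ∑ n, I m n * (1 - 1 / (1 + c m n * P m n) ^ 2) with hS
  set x := ∑ m, ∑ n, (I m n : ℝ) with hx
  have hIne : ∀ m n, (0:ℝ) ≤ I m n := fun m n => by rcases hI m n with h1 | h1 <;> simp [h1]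
  have hVle : ∀ m n, (1 - 1 / (1 + c m n * P m n) ^ 2) ≤ 1 := by
    intro m n
    have h1 : (1:ℝ) ≤ 1 + c m n * P m n := by nlinarith [hc m n, hP m n, mul_nonneg (hc m n) (hP m n)]
    have h2 : (0:ℝ) < (1 + c m n * P m n) ^ 2 := by positivity
    have : (0:ℝ) ≤ 1 / (1 + c m n * P m n) ^ 2 := by positivity
    linarith
  have hVnn : ∀ m n, (0:ℝ) ≤ 1 - 1 / (1 + c m n * P m n) ^ 2 := by
    intro m n
    have h1 : (1:ℝ) ≤ 1 + c m n * P m n := by nlinarith [mul_nonneg (hc m n) (hP m n)]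
    have h2 : (1:ℝ) ≤ (1 + c m n * P m n) ^ 2 := by nlinarith
    have : 1 / (1 + c m n * P m n) ^ 2 ≤ 1 := by
      rw [div_le_one (by linarith)]; linarith
    linarith
  have hSnn : 0 ≤ S := by
    apply Finset.sum_nonneg; intro m _
    exact Finset.sum_nonneg fun n _ => mul_nonneg (hIne m n) (hVnn m n)
  have hSx : S ≤ x := by
    apply Finset.sum_le_sum; intro m _
    apply Finset.sum_le_sum; intro n _
    calc I m n * (1 - 1 / (1 + c m n * P m n) ^ 2) ≤ I m n * 1 :=
          mul_le_mul_of_nonneg_left (hVle m n) (hIne m n)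
      _ = I m n := mul_one _
  have hxnn : 0 ≤ x := le_trans hSnn hSx
  have hs0 : 0 < Real.sqrt x₀ := Real.sqrt_pos.mpr hx₀
  have key : Real.sqrt S ≤ (x + x₀) / (2 * Real.sqrt x₀) := by
    have h1 : Real.sqrt S ≤ Real.sqrt x := Real.sqrt_le_sqrt hSx
    have h2 : Real.sqrt x ≤ (x + x₀) / (2 * Real.sqrt x₀) := by
      rw [le_div_iff₀ (by positivity)]
      have hsx : Real.sqrt x ^ 2 = x := Real.sq_sqrt hxnn
      have hsx0 : Real.sqrt x₀ ^ 2 = x₀ := Real.sq_sqrt hx₀.le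
      nlinarith [sq_nonneg (Real.sqrt x - Real.sqrt x₀)]
    linarith
  have hlog : 0 < Real.log 2 := Real.log_pos (by norm_num)
  have : Real.sqrt S * q / Real.log 2 ≤ (x + x₀) / (2 * Real.sqrt x₀) * q / Real.log 2 := by
    gcongr
  linarith
end
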